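/- arXiv:2211.12184 — 2 statements merged into one kernel-verified Lean document; each statement's English description precedes it below -/
import Mathlib

section
/- Let E : ℝ^d → ℝ be continuous with E(x*) = 0 = inf E, and suppose there exist E_∞, R₀, η > 0 and ν > 0 such that (i) ‖x - x*‖_∞ ≤ (1/η) E(x)^ν for all x with ‖x - x*‖_∞ ≤ R₀, and (ii) E(x) > E_∞ for all x with ‖x - x*‖_∞ > R₀. Then for any probability measure μ on ℝ^d, any r ∈ (0, R₀] and any q > 0 with q + E_r ≤ E_∞ (where E_r := sup_{‖y-x*‖_∞ ≤ r} E(y)), the consensus point y_α(μ) := (∫ y e^{-αE(y)} dμ(y)) / (∫ e^{-αE(y)} dμ(y)) satisfies ‖y_α(μ) - x*‖₂ ≤ √d (q + E_r)^ν / η + (√d e^{-αq} / μ(B_r^∞(x*))) ∫ ‖y - x*‖₂ dμ(y), provided μ(B_r^∞(x*)) > 0 and the relevant integrals are finite. -/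
/-!
With `w = exp (-α E)` and `Z = ∫ w dμ` we have `y_α(μ) - x* = Z⁻¹ ∫ w(y) (y - x*) dμ(y)`.
Every `y` satisfies either `E y ≤ q + E_r`, and then the inverse continuity property puts `y` in
the ℓ∞-box of half-width `(q + E_r)^ν / η` around `x*`, so `‖y - x*‖ ≤ C := √d (q + E_r)^ν / η`;
or `w y ≤ exp (-α (q + E_r))`. Hence `w(y) ‖y - x*‖ ≤ C w(y) + exp (-α (q + E_r)) ‖y - x*‖`
pointwise, and integrating bounds `‖y_α(μ) - x*‖` by `C + exp (-α (q + E_r)) / Z * ∫ ‖y - x*‖ dμ`.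
Since `w ≥ exp (-α E_r)` on `B_r^∞(x*)`, Markov's inequality gives `Z ≥ exp (-α E_r) μ(B_r^∞(x*))`.
-/

open MeasureTheory

theorem EuclideanSpace.norm_le_sqrt_card_mul_of_abs_le {ι : Type*} [Fintype ι]
    (z : EuclideanSpace ℝ ι) {c : ℝ} (hc : 0 ≤ c) (h : ∀ i, |z i| ≤ c) :
    ‖z‖ ≤ √(Fintype.card ι) * c := by
  rw [EuclideanSpace.norm_eq]
  calc √(∑ i, ‖z i‖ ^ 2) ≤ √(∑ _ : ι, c ^ 2) := by
        gcongr with i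
        rw [Real.norm_eq_abs]
        exact h i
    _ = √(Fintype.card ι) * c := by
        simp [Real.sqrt_mul, Real.sqrt_sq hc]

section WeightedMean

variable {X : Type*} [NormedAddCommGroup X] [NormedSpace ℝ X] [MeasurableSpace X]
  {μ : Measure X} {w : X → ℝ}

noncomputable def weightedMean (μ : Measure X) (w : X → ℝ) : X :=
  (∫ y, w y ∂μ)⁻¹ • ∫ y, w y • y ∂μ

theorem weightedMean_sub [CompleteSpace X] (hw : Integrable w μ)
    (hwy : Integrable (fun y => w y • y) μ) (hZ : ∫ y, w y ∂μ ≠ 0) (x : X) :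
    weightedMean μ w - x = (∫ y, w y ∂μ)⁻¹ • ∫ y, w y • (y - x) ∂μ := by
  simp only [smul_sub]
  rw [integral_sub hwy (hw.smul_const x), integral_smul_const, smul_sub, smul_smul,
    inv_mul_cancel₀ hZ, one_smul, weightedMean]

theorem norm_integral_smul_sub_le_of_forall_or {x : X} {C ε : ℝ} (hw : ∀ y, 0 ≤ w y)
    (hC : 0 ≤ C) (hε : 0 ≤ ε) (hwi : Integrable w μ) (hxi : Integrable (fun y => ‖y - x‖) μ)
    (h : ∀ y, ‖y - x‖ ≤ C ∨ w y ≤ ε) :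
    ‖∫ y, w y • (y - x) ∂μ‖ ≤ C * ∫ y, w y ∂μ + ε * ∫ y, ‖y - x‖ ∂μ := by
  have hbound : ∀ y, ‖w y • (y - x)‖ ≤ C * w y + ε * ‖y - x‖ := fun y => by
    rw [norm_smul, Real.norm_eq_abs, abs_of_nonneg (hw y)]
    have hwC := mul_nonneg hC (hw y)
    have hεn := mul_nonneg hε (norm_nonneg (y - x))
    rcases h y with hy | hy
    · nlinarith [mul_le_mul_of_nonneg_left hy (hw y)]
    · nlinarith [mul_le_mul_of_nonneg_right hy (norm_nonneg (y - x))]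
  calc ‖∫ y, w y • (y - x) ∂μ‖ ≤ ∫ y, (C * w y + ε * ‖y - x‖) ∂μ :=
        norm_integral_le_of_norm_le ((hwi.const_mul C).add (hxi.const_mul ε))
          (.of_forall hbound)
    _ = C * ∫ y, w y ∂μ + ε * ∫ y, ‖y - x‖ ∂μ := by
        rw [integral_add (hwi.const_mul C) (hxi.const_mul ε), integral_const_mul,
          integral_const_mul]

theorem norm_weightedMean_sub_le [CompleteSpace X] {x : X} {C ε : ℝ} (hw : ∀ y, 0 ≤ w y)
    (hC : 0 ≤ C) (hε : 0 ≤ ε) (hwi : Integrable w μ) (hwy : Integrable (fun y => w y • y) μ)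
    (hxi : Integrable (fun y => ‖y - x‖) μ) (hZ : 0 < ∫ y, w y ∂μ)
    (h : ∀ y, ‖y - x‖ ≤ C ∨ w y ≤ ε) :
    ‖weightedMean μ w - x‖ ≤ C + ε / (∫ y, w y ∂μ) * ∫ y, ‖y - x‖ ∂μ := by
  rw [weightedMean_sub hwi hwy hZ.ne', norm_smul, Real.norm_eq_abs, abs_of_pos (inv_pos.2 hZ)]
  calc (∫ y, w y ∂μ)⁻¹ * ‖∫ y, w y • (y - x) ∂μ‖
      ≤ (∫ y, w y ∂μ)⁻¹ * (C * ∫ y, w y ∂μ + ε * ∫ y, ‖y - x‖ ∂μ) := by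
        gcongr
        exact norm_integral_smul_sub_le_of_forall_or hw hC hε hwi hxi h
    _ = C + ε / (∫ y, w y ∂μ) * ∫ y, ‖y - x‖ ∂μ := by
        field_simp

end WeightedMean

theorem mul_measureReal_le_integral_of_le_on {X : Type*} [MeasurableSpace X] {μ : Measure X}
    [IsFiniteMeasure μ] {f : X → ℝ} {s : Set X} {c : ℝ} (hc : 0 ≤ c) (hf : ∀ y, 0 ≤ f y)
    (hfi : Integrable f μ) (h : ∀ y ∈ s, c ≤ f y) : c * μ.real s ≤ ∫ y, f y ∂μ :=
  (mul_le_mul_of_nonneg_left (measureReal_mono h) hc).trans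
    (mul_meas_ge_le_integral_of_nonneg (.of_forall hf) hfi c)

theorem integrable_exp_neg_mul {X : Type*} [MeasurableSpace X] {μ : Measure X}
    [IsFiniteMeasure μ] {E : X → ℝ} (hE : Measurable E) {α : ℝ} (hα : 0 ≤ α)
    (hEnn : ∀ x, 0 ≤ E x) : Integrable (fun y => Real.exp (-α * E y)) μ := by
  refine .of_bound (by fun_prop) 1 (.of_forall fun y => ?_)
  rw [Real.norm_eq_abs, abs_of_pos (Real.exp_pos _), Real.exp_le_one_iff]
  nlinarith [hEnn y]

theorem norm_sub_le_of_inverse_continuity {ι : Type*} [Fintype ι]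
    {E : EuclideanSpace ℝ ι → ℝ} {xstar : EuclideanSpace ℝ ι} {Einf R0 η ν t : ℝ}
    (hη : 0 < η) (hν : 0 ≤ ν) (hEnn : ∀ x, 0 ≤ E x)
    (hicp1 : ∀ x, (∀ i, |x i - xstar i| ≤ R0) → ∀ i, |x i - xstar i| ≤ (1/η) * E x ^ ν)
    (hicp2 : ∀ x, (∃ i, R0 < |x i - xstar i|) → Einf < E x) (htEinf : t ≤ Einf)
    {y : EuclideanSpace ℝ ι} (hy : E y ≤ t) :
    ‖y - xstar‖ ≤ √(Fintype.card ι) * t ^ ν / η := by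
  have hbox : ∀ i, |y i - xstar i| ≤ R0 := by
    by_contra! hout
    linarith [hicp2 y hout]
  have hcoord : ∀ i, |(y - xstar) i| ≤ t ^ ν / η := fun i => by
    rw [PiLp.sub_apply, ← one_div_mul_eq_div]
    refine (hicp1 y hbox i).trans ?_
    gcongr
    exact hEnn y
  rw [mul_div_assoc]
  exact EuclideanSpace.norm_le_sqrt_card_mul_of_abs_le _
    (div_nonneg (Real.rpow_nonneg ((hEnn y).trans hy) ν) hη.le) hcoord

theorem quantitative_laplace_general {d : ℕ} (hd : 0 < d)
    (E : EuclideanSpace ℝ (Fin d) → ℝ) (xstar : EuclideanSpace ℝ (Fin d))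
    (α Einf R0 η ν Er r q : ℝ)
    (μ : Measure (EuclideanSpace ℝ (Fin d))) [IsProbabilityMeasure μ]
    (hα : 0 < α) (hE : Continuous E) (hExstar : E xstar = 0) (hEnn : ∀ x, 0 ≤ E x)
    (hη : 0 < η) (hν : 0 < ν)
    (hicp1 : ∀ x, (∀ i, |x i - xstar i| ≤ R0) → ∀ i, |x i - xstar i| ≤ (1/η) * E x ^ ν)
    (hicp2 : ∀ x, (∃ i, R0 < |x i - xstar i|) → Einf < E x)
    (hr : 0 < r) (hq : 0 < q)
    (hEr : IsLUB (E '' {y | ∀ i, |y i - xstar i| ≤ r}) Er)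
    (hqEr : q + Er ≤ Einf)
    (hmass : 0 < (μ {y | ∀ i, |y i - xstar i| ≤ r}).toReal)
    (hint1 : Integrable (fun y => Real.exp (-α * E y) • y) μ)
    (hint2 : Integrable (fun y => ‖y - xstar‖) μ) :
    ‖(∫ y, Real.exp (-α * E y) ∂μ)⁻¹ • (∫ y, Real.exp (-α * E y) • y ∂μ) - xstar‖
      ≤ Real.sqrt d * (q + Er) ^ ν / η
        + Real.sqrt d * Real.exp (-α * q) / (μ {y | ∀ i, |y i - xstar i| ≤ r}).toReal
          * ∫ y, ‖y - xstar‖ ∂μ := by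
  set w : EuclideanSpace ℝ (Fin d) → ℝ := fun y => Real.exp (-α * E y)
  set B : Set (EuclideanSpace ℝ (Fin d)) := {y | ∀ i, |y i - xstar i| ≤ r}
  have hw_pos : ∀ y, 0 < w y := fun y => Real.exp_pos _
  have hw_int : Integrable w μ := integrable_exp_neg_mul hE.measurable hα.le hEnn
  have hEr_nonneg : 0 ≤ Er := hEr.1 ⟨xstar, fun i => by simp [hr.le], hExstar⟩
  have hZ : Real.exp (-α * Er) * μ.real B ≤ ∫ y, w y ∂μ :=
    mul_measureReal_le_integral_of_le_on (Real.exp_pos _).le (fun y => (hw_pos y).le) hw_int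
      fun y hy => Real.exp_le_exp.2 (by nlinarith [hEr.1 ⟨y, hy, rfl⟩])
  have hZ_pos : 0 < ∫ y, w y ∂μ := lt_of_lt_of_le (by positivity) hZ
  have hdichotomy : ∀ y, ‖y - xstar‖ ≤ Real.sqrt d * (q + Er) ^ ν / η
      ∨ w y ≤ Real.exp (-α * (q + Er)) := fun y => by
    rcases le_or_gt (E y) (q + Er) with hy | hy
    · left
      simpa using norm_sub_le_of_inverse_continuity hη hν.le hEnn hicp1 hicp2 hqEr hy
    · exact .inr (Real.exp_le_exp.2 (by nlinarith))
  have hweight : Real.exp (-α * (q + Er)) / ∫ y, w y ∂μ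
      ≤ Real.sqrt d * Real.exp (-α * q) / μ.real B :=
    calc Real.exp (-α * (q + Er)) / ∫ y, w y ∂μ
        ≤ Real.exp (-α * (q + Er)) / (Real.exp (-α * Er) * μ.real B) := by gcongr
      _ = Real.exp (-α * q) / μ.real B := by
        rw [← div_div, ← Real.exp_sub]
        ring_nf
      _ ≤ Real.sqrt d * Real.exp (-α * q) / μ.real B := by
        gcongr
        exact le_mul_of_one_le_left (Real.exp_pos _).le
          (Real.one_le_sqrt.2 (by exact_mod_cast hd))
  calc _ ≤ Real.sqrt d * (q + Er) ^ ν / η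
        + Real.exp (-α * (q + Er)) / (∫ y, w y ∂μ) * ∫ y, ‖y - xstar‖ ∂μ :=
        norm_weightedMean_sub_le (fun y => (hw_pos y).le) (by positivity) (Real.exp_pos _).le
          hw_int hint1 hint2 hZ_pos hdichotomy
    _ ≤ _ := add_le_add_right
        (mul_le_mul_of_nonneg_right hweight (integral_nonneg fun y => norm_nonneg _)) _

/-- Quantitative Laplace principle: under the inverse continuity property,
the consensus point `y_α(μ)` is quantitatively close to the global minimizer `x*`. -/
theorem quantitative_laplace {d : ℕ} (hd : 0 < d)
    (E : EuclideanSpace ℝ (Fin d) → ℝ) (xstar : EuclideanSpace ℝ (Fin d))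
    (α Einf R0 η ν Er r q : ℝ)
    (μ : Measure (EuclideanSpace ℝ (Fin d))) [IsProbabilityMeasure μ]
    (hα : 0 < α) (hE : Continuous E) (hExstar : E xstar = 0) (hEnn : ∀ x, 0 ≤ E x)
    (hEinf : 0 < Einf) (hR0 : 0 < R0) (hη : 0 < η) (hν : 0 < ν)
    (hicp1 : ∀ x, (∀ i, |x i - xstar i| ≤ R0) → ∀ i, |x i - xstar i| ≤ (1/η) * E x ^ ν)
    (hicp2 : ∀ x, (∃ i, R0 < |x i - xstar i|) → Einf < E x)
    (hr : 0 < r) (hrR0 : r ≤ R0) (hq : 0 < q)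
    (hEr : IsLUB (E '' {y | ∀ i, |y i - xstar i| ≤ r}) Er)
    (hqEr : q + Er ≤ Einf)
    (hmass : 0 < (μ {y | ∀ i, |y i - xstar i| ≤ r}).toReal)
    (hint1 : Integrable (fun y => Real.exp (-α * E y) • y) μ)
    (hint2 : Integrable (fun y => ‖y - xstar‖) μ) :
    ‖(∫ y, Real.exp (-α * E y) ∂μ)⁻¹ • (∫ y, Real.exp (-α * E y) • y ∂μ) - xstar‖
      ≤ Real.sqrt d * (q + Er) ^ ν / η
        + Real.sqrt d * Real.exp (-α * q) / (μ {y | ∀ i, |y i - xstar i| ≤ r}).toReal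
          * ∫ y, ‖y - xstar‖ ∂μ :=
  quantitative_laplace_general hd E xstar α Einf R0 η ν Er r q μ hα hE hExstar hEnn hη hν hicp1
    hicp2 hr hq hEr hqEr hmass hint1 hint2
end

section
/- Under the inverse continuity property (‖x - x*‖_∞ ≤ (1/η) E(x)^ν on B_{R₀}^∞(x*) and E > E_∞ outside it, with E(x*) = 0), if r ∈ (0, R₀], q > 0, q + E_r ≤ E_∞, and r̃ := (q + E_r)^ν / η, then r̃ ≥ r and inf_{y ∉ B_{r̃}^∞(x*)} E(y) - E_r ≥ q. -/
/-!
Below the threshold `E_∞` every sublevel set `{E ≤ t}` lies in `B_{R₀}`, where the inverse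
continuity property bounds the distance to `x*` by `t^ν / η`; so `{E ≤ t} ⊆ B_{t^ν/η}(x*)`.
With `t = q + E_r` this gives the lower bound on `E` outside `B_{r̃}(x*)`, and since
`B_r(x*) ⊆ {E ≤ E_r} ⊆ {E ≤ t}` contains a point at distance exactly `r`, also `r ≤ r̃`.
-/

open Metric

/-- `fInf`, `R` are the paper's `E_∞`, `R₀`. -/
def InverseContinuity {X : Type*} [PseudoMetricSpace X] (f : X → ℝ) (c : X)
    (fInf R η ν : ℝ) : Prop :=
  (∀ x ∈ closedBall c R, dist x c ≤ f x ^ ν / η) ∧ ∀ x ∉ closedBall c R, fInf < f x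

namespace InverseContinuity

variable {X : Type*} [PseudoMetricSpace X] {f : X → ℝ} {c : X} {fInf R η ν t : ℝ}

theorem mem_closedBall_of_le (h : InverseContinuity f c fInf R η ν) (hη : 0 ≤ η)
    (hν : 0 ≤ ν) {y : X} (hfy : 0 ≤ f y) (hyt : f y ≤ t) (ht : t ≤ fInf) :
    y ∈ closedBall c (t ^ ν / η) := by
  have hyR : y ∈ closedBall c R := by
    by_contra hyR
    linarith [h.2 y hyR]
  calc dist y c ≤ f y ^ ν / η := h.1 y hyR
    _ ≤ t ^ ν / η := by gcongr

theorem le_rpow_div (h : InverseContinuity f c fInf R η ν) (hη : 0 ≤ η) (hν : 0 ≤ ν)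
    (hf : ∀ x, 0 ≤ f x) (ht : t ≤ fInf) {y : X} (hy : y ∉ closedBall c (t ^ ν / η)) :
    t ≤ f y := by
  by_contra! hyt
  exact hy (h.mem_closedBall_of_le hη hν (hf y) hyt.le ht)

theorem radius_le_rpow_div {V : Type*} [NormedAddCommGroup V] [NormedSpace ℝ V]
    [Nontrivial V] {f : V → ℝ} {c : V} {r : ℝ} (h : InverseContinuity f c fInf R η ν)
    (hη : 0 ≤ η) (hν : 0 ≤ ν) (hf : ∀ x, 0 ≤ f x) (hr : 0 ≤ r)
    (hft : ∀ x ∈ closedBall c r, f x ≤ t) (ht : t ≤ fInf) :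
    r ≤ t ^ ν / η := by
  obtain ⟨x, hx⟩ := (NormedSpace.sphere_nonempty (x := c)).2 hr
  rw [← mem_sphere.1 hx]
  exact h.mem_closedBall_of_le hη hν (hf x) (hft x (sphere_subset_closedBall hx)) ht

end InverseContinuity

theorem laplace_radius_step_general {d : ℕ} (hd : 0 < d) (E : (Fin d → ℝ) → ℝ)
    (xstar : Fin d → ℝ) (Einf R0 η ν Er r q : ℝ)
    (hEnn : ∀ x, 0 ≤ E x)
    (hη : 0 < η) (hν : 0 < ν)
    (hicp1 : ∀ x ∈ Metric.closedBall xstar R0, ‖x - xstar‖ ≤ (1/η) * E x ^ ν)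
    (hicp2 : ∀ x ∉ Metric.closedBall xstar R0, Einf < E x)
    (hr : 0 < r) (hq : 0 < q)
    (hEr : IsLUB (E '' Metric.closedBall xstar r) Er)
    (hqEr : q + Er ≤ Einf) :
    r ≤ (q + Er) ^ ν / η ∧
      ∀ y ∉ Metric.closedBall xstar ((q + Er) ^ ν / η), q + Er ≤ E y := by
  have hicp : InverseContinuity E xstar Einf R0 η ν :=
    ⟨fun x hx ↦ by simpa [dist_eq_norm, div_eq_inv_mul] using hicp1 x hx, hicp2⟩
  have hE_le : ∀ x ∈ closedBall xstar r, E x ≤ q + Er := fun x hx ↦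
    (hEr.1 ⟨x, hx, rfl⟩).trans (le_add_of_nonneg_left hq.le)
  have : Nonempty (Fin d) := ⟨⟨0, hd⟩⟩
  exact ⟨hicp.radius_le_rpow_div hη.le hν.le hEnn hr.le hE_le hqEr,
    fun y hy ↦ hicp.le_rpow_div hη.le hν.le hEnn hqEr hy⟩

/-- Intermediate step of the quantitative Laplace principle: with
`r̃ := (q + E_r)^ν / η` one has `r̃ ≥ r` and `E(y) ≥ q + E_r` outside
the ℓ∞-ball of radius `r̃` (here `Fin d → ℝ` carries the sup norm). -/
theorem laplace_radius_step {d : ℕ} (hd : 0 < d) (E : (Fin d → ℝ) → ℝ)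
    (xstar : Fin d → ℝ) (Einf R0 η ν Er r q : ℝ)
    (hE : Continuous E) (hExstar : E xstar = 0) (hEnn : ∀ x, 0 ≤ E x)
    (hη : 0 < η) (hν : 0 < ν) (hR0 : 0 < R0) (hEinf : 0 < Einf)
    (hicp1 : ∀ x ∈ Metric.closedBall xstar R0, ‖x - xstar‖ ≤ (1/η) * E x ^ ν)
    (hicp2 : ∀ x ∉ Metric.closedBall xstar R0, Einf < E x)
    (hr : 0 < r) (hrR0 : r ≤ R0) (hq : 0 < q)
    (hEr : IsLUB (E '' Metric.closedBall xstar r) Er)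
    (hqEr : q + Er ≤ Einf) :
    r ≤ (q + Er) ^ ν / η ∧
      ∀ y ∉ Metric.closedBall xstar ((q + Er) ^ ν / η), q + Er ≤ E y :=
  laplace_radius_step_general hd E xstar Einf R0 η ν Er r q hEnn hη hν hicp1 hicp2 hr hq hEr hqEr
end
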